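/- If u, u' ∈ ℂ satisfy both Θ₀(u)·Θ₁(u') = Θ₁(u)·Θ₀(u') and Θ₀(u + τ/4)·Θ₁(u' + τ/4) = Θ₁(u + τ/4)·Θ₀(u' + τ/4), then u − u' ∈ Λ_τ. (Hence the map Φ = (Φ₁, Φ₂) : ℂ/Λ_τ → ℙ¹ × ℙ¹ with Φ₁(u) = (Θ₀(u) : −Θ₁(u)) and Φ₂(u) = (Θ₀(u + τ/4) : −iΘ₁(u + τ/4)) is injective on the elliptic curve E_τ = ℂ/Λ_τ.) -/

import Mathlib

open Complex

/-- `Θ₀(u) = θ[0,0](2u,2τ) = ∑_{m∈ℤ} exp(2πiτm² + 4πimu)`. -/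
noncomputable def Th0 (τ u : ℂ) : ℂ :=
  ∑' m : ℤ, Complex.exp (2 * Real.pi * I * τ * (m : ℂ) ^ 2
      + 4 * Real.pi * I * (m : ℂ) * u)

/-- `Θ₁(u) = θ[1/2,0](2u,2τ) = ∑_{m∈ℤ} exp(2πiτ(m+1/2)² + 4πi(m+1/2)u)`. -/
noncomputable def Th1 (τ u : ℂ) : ℂ :=
  ∑' m : ℤ, Complex.exp (2 * Real.pi * I * τ * ((m : ℂ) + 1 / 2) ^ 2
      + 4 * Real.pi * I * ((m : ℂ) + 1 / 2) * u)

/-- Membership in the lattice `Λ_τ = ℤ + ℤτ ⊂ ℂ`. -/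
def inLattice (τ z : ℂ) : Prop := ∃ m n : ℤ, z = (m : ℂ) + (n : ℂ) * τ

/-!
The odd theta function `V(z) = ∑ₙ exp(πiτ(n+½)² + 2πi(n+½)z + πin)` (that is, `-i θ₁₁(z, τ)`)
satisfies the addition formula `V(u+u')V(u-u') = Θ₁(u)Θ₀(u') - Θ₀(u)Θ₁(u')`: split the double
series of the left side according to the parity of the sum of the two indices. Its zeros lie in
`Λ_τ`. Hence the first hypothesis puts `u+u'` or `u-u'` into `Λ_τ`, the second one puts
`u+u'+τ/2` or `u-u'` into `Λ_τ`, and since `τ/2 ∉ Λ_τ` we get `u-u' ∈ Λ_τ`.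

The zeros of `V` are located by modular reduction. `V(·, τ+1)` is a constant multiple of
`V(·, τ)`, and the functional equation of `jacobiTheta₂` matches the zeros of `V(·, τ)` with those
of `V(·, -1/τ)`; a translation followed by an inversion at least doubles `Im τ` while
`Im τ < 1/2`. Once `Im τ ≥ 1/2`, translate a zero `z` by a multiple of `τ` so that
`|Im z| ≤ Im τ/2`: then `V(z) / sin(πz)` is a series whose constant term dominates all the others,
so `sin(πz) = 0`.
-/

open scoped Real

noncomputable section

lemma norm_geom_sum₂_le {R : Type*} [SeminormedRing R] [NormOneClass R] {x y : R} {s : ℝ}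
    (hx : ‖x‖ ≤ s) (hy : ‖y‖ ≤ s) (k : ℕ) :
    ‖∑ i ∈ Finset.range k, x ^ i * y ^ (k - 1 - i)‖ ≤ k * s ^ (k - 1) := by
  have hs : 0 ≤ s := (norm_nonneg x).trans hx
  calc _ ≤ ∑ i ∈ Finset.range k, ‖x ^ i * y ^ (k - 1 - i)‖ := norm_sum_le _ _
    _ ≤ ∑ _i ∈ Finset.range k, s ^ (k - 1) := Finset.sum_le_sum fun i hi ↦ ?_
    _ = k * s ^ (k - 1) := by simp
  calc ‖x ^ i * y ^ (k - 1 - i)‖ ≤ ‖x‖ ^ i * ‖y‖ ^ (k - 1 - i) :=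
        (norm_mul_le _ _).trans (mul_le_mul (norm_pow_le _ _) (norm_pow_le _ _) (norm_nonneg _)
          (by positivity))
    _ ≤ s ^ i * s ^ (k - 1 - i) := by gcongr
    _ = s ^ (k - 1) := pow_mul_pow_sub s (by have := Finset.mem_range.1 hi; omega)

lemma norm_le_tsum_of_hasSum_zero {E : Type*} [NormedAddCommGroup E] {a : ℕ → E} {g : ℕ → ℝ}
    (ha : HasSum a 0) (hg : Summable g) (hag : ∀ n, ‖a (n + 1)‖ ≤ g n) :
    ‖a 0‖ ≤ ∑' n, g n := by
  have htail : HasSum (fun n ↦ a (n + 1)) (-a 0) := by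
    simpa using (hasSum_nat_add_iff' 1).2 ha
  simpa [htail.tsum_eq] using tsum_of_norm_bounded hg.hasSum hag

lemma hasSum_mul_of_summable_norm {ι κ R : Type*} [NormedRing R] [CompleteSpace R] {f : ι → R}
    {g : κ → R} (hf : Summable fun i ↦ ‖f i‖) (hg : Summable fun j ↦ ‖g j‖) :
    HasSum (fun p : ι × κ ↦ f p.1 * g p.2) ((∑' i, f i) * ∑' j, g j) :=
  hf.of_norm.hasSum.mul hg.of_norm.hasSum (summable_mul_of_summable_norm hf hg)

lemma three_mul_div_one_sub_two_mul_sq_lt_one {r : ℝ} (hr0 : 0 ≤ r) (hr : r ≤ 1 / 4) :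
    3 * r / (1 - 2 * r ^ 2) < 1 := by
  rw [div_lt_one (by nlinarith)]
  nlinarith

lemma two_mul_add_one_mul_pow_sq_le {r : ℝ} (hr0 : 0 ≤ r) (hr1 : r ≤ 1) (n : ℕ) :
    (2 * (n + 1 : ℕ) + 1) * r ^ ((n + 1) ^ 2) ≤ 3 * r * (2 * r ^ 2) ^ n := by
  have hlin : (2 * (n + 1 : ℕ) + 1 : ℝ) ≤ 3 * 2 ^ n := by
    induction n with
    | zero => norm_num
    | succ k ih => push_cast at ih ⊢; linarith [pow_succ (2 : ℝ) k]
  have hpow : r ^ ((n + 1) ^ 2) ≤ r ^ (2 * n + 1) :=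
    pow_le_pow_of_le_one hr0 hr1 (by nlinarith)
  calc (2 * (n + 1 : ℕ) + 1) * r ^ ((n + 1) ^ 2) ≤ 3 * 2 ^ n * r ^ (2 * n + 1) := by gcongr
    _ = 3 * r * (2 * r ^ 2) ^ n := by ring

lemma exp_neg_pi_mul_le_quarter {t : ℝ} (ht : 1 / 2 ≤ t) : Real.exp (-(π * t)) ≤ 1 / 4 := by
  have h₁ : 2 ≤ Real.exp (π / 4) := by
    nlinarith [Real.quadratic_le_exp_of_nonneg (by positivity : 0 ≤ π / 4), Real.pi_gt_three]
  have h₂ : Real.exp (π / 4) ^ 2 ≤ Real.exp (π * t) := by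
    rw [← Real.exp_nat_mul]
    exact Real.exp_le_exp.2 (by nlinarith [Real.pi_pos])
  rw [Real.exp_neg, inv_le_comm₀ (Real.exp_pos _) (by norm_num)]
  nlinarith

lemma exp_mul_I_sub_exp_neg_mul_I (w : ℂ) :
    cexp (w * I) - cexp (-w * I) = 2 * I * Complex.sin w := by
  rw [Complex.exp_mul_I, Complex.exp_mul_I, Complex.cos_neg, Complex.sin_neg]
  ring

lemma inLattice.sub {τ z w : ℂ} (hz : inLattice τ z) (hw : inLattice τ w) :
    inLattice τ (z - w) := by
  obtain ⟨m, n, rfl⟩ := hz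
  obtain ⟨m', n', rfl⟩ := hw
  exact ⟨m - m', n - n', by push_cast; ring⟩

lemma not_inLattice_half_self {τ : ℂ} (hτ : 0 < τ.im) : ¬inLattice τ (τ / 2) := by
  rintro ⟨m, n, h⟩
  have him : ((2 * n - 1 : ℤ) : ℝ) * τ.im = 0 := by
    have := congrArg Complex.im h
    simp only [div_ofNat_im, add_im, intCast_im, mul_im, intCast_re, zero_mul, add_zero,
      zero_add] at this
    push_cast
    linarith
  have : (2 * n - 1 : ℤ) = 0 := by exact_mod_cast (mul_eq_zero.1 him).resolve_right hτ.ne'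
  omega

def oddThetaTerm (τ z : ℂ) (n : ℤ) : ℂ :=
  cexp (π * I * τ * (n + 1 / 2) ^ 2 + 2 * π * I * (n + 1 / 2) * z + π * I * n)

def oddTheta (τ z : ℂ) : ℂ := ∑' n : ℤ, oddThetaTerm τ z n

lemma oddThetaTerm_eq_mul_jacobiTheta₂_term (τ z : ℂ) (n : ℤ) :
    oddThetaTerm τ z n =
      cexp (π * I * τ / 4 + π * I * z) * jacobiTheta₂_term n (z + 1 / 2 + τ / 2) τ := by
  rw [oddThetaTerm, jacobiTheta₂_term, ← Complex.exp_add]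
  ring_nf

lemma summable_norm_jacobiTheta₂_term_mul_left {τ : ℂ} (hτ : 0 < τ.im) (a z : ℂ) :
    Summable fun n : ℤ ↦ ‖a * jacobiTheta₂_term n z τ‖ :=
  summable_norm_iff.2 (((summable_jacobiTheta₂_term_iff z τ).2 hτ).mul_left a)

lemma summable_norm_oddThetaTerm {τ : ℂ} (hτ : 0 < τ.im) (z : ℂ) :
    Summable fun n ↦ ‖oddThetaTerm τ z n‖ := by
  simpa only [oddThetaTerm_eq_mul_jacobiTheta₂_term] using
    summable_norm_jacobiTheta₂_term_mul_left hτ _ (z + 1 / 2 + τ / 2)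

lemma hasSum_oddThetaTerm {τ : ℂ} (hτ : 0 < τ.im) (z : ℂ) :
    HasSum (oddThetaTerm τ z) (oddTheta τ z) :=
  (summable_norm_oddThetaTerm hτ z).of_norm.hasSum

lemma oddTheta_eq_mul_jacobiTheta₂ (τ z : ℂ) :
    oddTheta τ z = cexp (π * I * τ / 4 + π * I * z) * jacobiTheta₂ (z + 1 / 2 + τ / 2) τ := by
  simp_rw [oddTheta, jacobiTheta₂, oddThetaTerm_eq_mul_jacobiTheta₂_term, tsum_mul_left]

lemma oddTheta_eq_zero_iff (τ z : ℂ) :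
    oddTheta τ z = 0 ↔ jacobiTheta₂ (z + 1 / 2 + τ / 2) τ = 0 := by
  simp [oddTheta_eq_mul_jacobiTheta₂, Complex.exp_ne_zero]

lemma oddTheta_add_int_left (τ z : ℂ) (k : ℤ) :
    oddTheta (τ + k) z = cexp (π * I * k / 4) * oddTheta τ z := by
  simp_rw [oddTheta, ← tsum_mul_left]
  refine tsum_congr fun n ↦ ?_
  obtain ⟨j, hj⟩ := Int.even_mul_succ_self n
  rw [oddThetaTerm, oddThetaTerm, ← Complex.exp_add, Complex.exp_eq_exp_iff_exists_int]
  -- `(n + 1/2)² = n (n + 1) + 1/4` and `n (n + 1) = 2 j`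
  refine ⟨k * j, ?_⟩
  have hj' : (n : ℂ) * (n + 1) = j + j := by exact_mod_cast hj
  push_cast
  linear_combination π * I * k * hj'

lemma periodic_oddTheta_eq_zero (τ : ℂ) : Function.Periodic (fun z ↦ oddTheta τ z = 0) τ := by
  intro z
  refine eq_iff_iff.2 ?_
  dsimp only
  rw [oddTheta_eq_zero_iff, oddTheta_eq_zero_iff, add_right_comm z τ, add_right_comm _ τ,
    jacobiTheta₂_add_left', mul_eq_zero, or_iff_right (Complex.exp_ne_zero _)]

def oddThetaDivSinTerm (τ z : ℂ) (n : ℕ) : ℂ :=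
  oddThetaTerm τ 0 n *
    ∑ i ∈ Finset.range (2 * n + 1), cexp (π * z * I) ^ i * cexp (-(π * z) * I) ^ (2 * n - i)

lemma oddThetaTerm_add_oddThetaTerm_neg_succ (τ z : ℂ) (n : ℕ) :
    oddThetaTerm τ z n + oddThetaTerm τ z (-(n + 1)) =
      2 * I * Complex.sin (π * z) * oddThetaDivSinTerm τ z n := by
  have hpos : oddThetaTerm τ z n = oddThetaTerm τ 0 n * cexp (π * z * I) ^ (2 * n + 1) := by
    rw [oddThetaTerm, oddThetaTerm, ← Complex.exp_nat_mul, ← Complex.exp_add]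
    push_cast
    ring_nf
  have hneg : oddThetaTerm τ z (-(n + 1)) =
      -(oddThetaTerm τ 0 n * cexp (-(π * z) * I) ^ (2 * n + 1)) := by
    rw [oddThetaTerm, oddThetaTerm, ← Complex.exp_nat_mul, ← Complex.exp_add,
      neg_eq_neg_one_mul (cexp _), ← Complex.exp_pi_mul_I, ← Complex.exp_add,
      Complex.exp_eq_exp_iff_exists_int]
    exact ⟨-(n + 1), by push_cast; ring⟩
  have hgeom := geom_sum₂_mul (cexp (π * z * I)) (cexp (-(π * z) * I)) (2 * n + 1)
  rw [Nat.add_sub_cancel] at hgeom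
  rw [hpos, hneg, oddThetaDivSinTerm, ← exp_mul_I_sub_exp_neg_mul_I]
  linear_combination -oddThetaTerm τ 0 n * hgeom

lemma hasSum_oddThetaDivSinTerm {τ z : ℂ} (hτ : 0 < τ.im) (hz : Complex.sin (π * z) ≠ 0) :
    HasSum (oddThetaDivSinTerm τ z) (oddTheta τ z / (2 * I * Complex.sin (π * z))) := by
  have hne : 2 * I * Complex.sin (π * z) ≠ 0 := by simp [hz, Complex.I_ne_zero]
  rw [← hasSum_mul_left_iff hne, mul_div_cancel₀ _ hne]
  simpa only [oddThetaTerm_add_oddThetaTerm_neg_succ] using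
    (hasSum_oddThetaTerm hτ z).nat_add_neg_add_one

lemma norm_oddThetaTerm_zero (τ : ℂ) (n : ℕ) :
    ‖oddThetaTerm τ 0 n‖ = Real.exp (-(π * τ.im) / 4) * Real.exp (-(π * τ.im)) ^ (n ^ 2 + n) := by
  have hexp :
      π * I * τ * ((n : ℤ) + 1 / 2) ^ 2 + 2 * π * I * ((n : ℤ) + 1 / 2) * 0 + π * I * (n : ℤ) =
        (π * (n + 1 / 2) ^ 2 : ℝ) * (τ * I) + (π * n : ℝ) * I := by
    push_cast; ring
  rw [oddThetaTerm, hexp, Complex.norm_exp, ← Real.exp_nat_mul, ← Real.exp_add]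
  simp only [Complex.add_re, Complex.re_ofReal_mul, Complex.mul_I_re, Complex.ofReal_im, neg_zero,
    add_zero]
  congr 1
  push_cast
  ring

lemma norm_oddThetaDivSinTerm_le {τ z : ℂ} (hz : |z.im| ≤ τ.im / 2) (n : ℕ) :
    ‖oddThetaDivSinTerm τ z n‖ ≤
      (2 * n + 1) * Real.exp (-(π * τ.im) / 4) * Real.exp (-(π * τ.im)) ^ (n ^ 2) := by
  have hx : ‖cexp (π * z * I)‖ ≤ Real.exp (π * τ.im / 2) := by
    rw [Complex.norm_exp]
    refine Real.exp_le_exp.2 ?_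
    simp only [mul_re, ofReal_re, ofReal_im, zero_mul, sub_zero, I_re, mul_zero, mul_im, add_zero,
      I_im, mul_one, zero_sub]
    nlinarith [neg_abs_le z.im, Real.pi_pos]
  have hy : ‖cexp (-(π * z) * I)‖ ≤ Real.exp (π * τ.im / 2) := by
    rw [Complex.norm_exp]
    refine Real.exp_le_exp.2 ?_
    simp only [neg_mul, neg_re, mul_re, ofReal_re, ofReal_im, zero_mul, sub_zero, I_re, mul_zero,
      mul_im, add_zero, I_im, mul_one, zero_sub, neg_neg]
    nlinarith [le_abs_self z.im, Real.pi_pos]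
  have hsum := norm_geom_sum₂_le hx hy (2 * n + 1)
  rw [Nat.add_sub_cancel] at hsum
  rw [oddThetaDivSinTerm, norm_mul, norm_oddThetaTerm_zero]
  calc _ ≤ Real.exp (-(π * τ.im) / 4) * Real.exp (-(π * τ.im)) ^ (n ^ 2 + n) *
        (((2 * n + 1 : ℕ) : ℝ) * Real.exp (π * τ.im / 2) ^ (2 * n)) := by gcongr
    _ = (2 * n + 1) * Real.exp (-(π * τ.im) / 4) * Real.exp (-(π * τ.im)) ^ (n ^ 2) *
          (Real.exp (-(π * τ.im)) * Real.exp (π * τ.im / 2) ^ 2) ^ n := by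
      simp only [Nat.cast_add, Nat.cast_mul, Nat.cast_ofNat, Nat.cast_one]
      ring
    _ = _ := by
      have hone : Real.exp (-(π * τ.im)) * Real.exp (π * τ.im / 2) ^ 2 = 1 := by
        rw [← Real.exp_nat_mul, ← Real.exp_add, Real.exp_eq_one_iff]
        push_cast
        ring
      rw [hone, one_pow, mul_one]

lemma exists_intCast_eq_of_oddTheta_eq_zero {τ z : ℂ} (hτ : 1 / 2 ≤ τ.im)
    (hz : |z.im| ≤ τ.im / 2) (h : oddTheta τ z = 0) : ∃ m : ℤ, z = m := by
  by_contra hz_int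
  have hsin : Complex.sin (π * z) ≠ 0 := by
    rw [Ne, Complex.sin_eq_zero_iff]
    rintro ⟨k, hk⟩
    exact hz_int ⟨k, mul_left_cancel₀ (Complex.ofReal_ne_zero.2 Real.pi_ne_zero) (by rw [hk]; ring)⟩
  have hsum := hasSum_oddThetaDivSinTerm (by linarith : 0 < τ.im) hsin
  rw [h, zero_div] at hsum
  set r := Real.exp (-(π * τ.im))
  have hr0 : 0 ≤ r := (Real.exp_pos _).le
  have hr : r ≤ 1 / 4 := exp_neg_pi_mul_le_quarter hτ
  set c := Real.exp (-(π * τ.im) / 4)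
  -- the term `n = 0` has norm `c`, the others add up to at most `3r / (1 - 2r²) · c ≤ 6/7 · c`
  have hgeom : HasSum (fun n : ℕ ↦ c * (3 * r * (2 * r ^ 2) ^ n))
      (c * (3 * r / (1 - 2 * r ^ 2))) := by
    rw [div_eq_mul_inv]
    exact ((hasSum_geometric_of_lt_one (by positivity) (by nlinarith)).mul_left (3 * r)).mul_left c
  have hdom := norm_le_tsum_of_hasSum_zero hsum hgeom.summable fun n ↦ calc
    _ ≤ _ := norm_oddThetaDivSinTerm_le hz (n + 1)
    _ = c * ((2 * (n + 1 : ℕ) + 1) * r ^ ((n + 1) ^ 2)) := by ring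
    _ ≤ _ := mul_le_mul_of_nonneg_left (two_mul_add_one_mul_pow_sq_le hr0 (by linarith) n)
      (Real.exp_pos _).le
  have hhead : ‖oddThetaDivSinTerm τ z 0‖ = c := by
    rw [oddThetaDivSinTerm, norm_mul, norm_oddThetaTerm_zero]
    simp [c]
  rw [hgeom.tsum_eq, hhead] at hdom
  nlinarith [three_mul_div_one_sub_two_mul_sq_lt_one hr0 hr, Real.exp_pos (-(π * τ.im) / 4)]

def OddThetaZerosInLattice (τ : ℂ) : Prop := ∀ z, oddTheta τ z = 0 → inLattice τ z

lemma oddThetaZerosInLattice_of_half_le_im {τ : ℂ} (hτ : 1 / 2 ≤ τ.im) :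
    OddThetaZerosInLattice τ := by
  intro z hz
  set n := round (z.im / τ.im)
  have hshift : oddTheta τ (z - n * τ) = 0 :=
    (eq_iff_iff.1 ((periodic_oddTheta_eq_zero τ).sub_int_mul_eq n)).2 hz
  have hstrip : |(z - n * τ).im| ≤ τ.im / 2 := by
    have hτ0 : 0 < τ.im := by linarith
    have him : (z - n * τ).im = (z.im / τ.im - n) * τ.im := by
      simp [field]
    rw [him, abs_mul, abs_of_pos hτ0]
    nlinarith [abs_sub_round (z.im / τ.im)]
  obtain ⟨m, hm⟩ := exists_intCast_eq_of_oddTheta_eq_zero hτ hstrip hshift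
  exact ⟨m, n, by rw [← hm]; ring⟩

lemma OddThetaZerosInLattice.of_add_int {τ : ℂ} (k : ℤ) (h : OddThetaZerosInLattice (τ + k)) :
    OddThetaZerosInLattice τ := by
  intro z hz
  obtain ⟨m, n, hmn⟩ := h z (by rw [oddTheta_add_int_left, hz, mul_zero])
  exact ⟨m + n * k, n, by rw [hmn]; push_cast; ring⟩

lemma jacobiTheta₂_eq_zero_iff_neg_inv {τ : ℂ} (hτ : τ ≠ 0) (w : ℂ) :
    jacobiTheta₂ w τ = 0 ↔ jacobiTheta₂ (w / τ) (-1 / τ) = 0 := by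
  have hsqrt : (-I * τ) ^ (1 / 2 : ℂ) ≠ 0 :=
    Complex.cpow_ne_zero_iff.2 (Or.inl (mul_ne_zero (neg_ne_zero.2 Complex.I_ne_zero) hτ))
  rw [jacobiTheta₂_functional_equation, mul_eq_zero,
    or_iff_right (mul_ne_zero (one_div_ne_zero hsqrt) (Complex.exp_ne_zero _))]

lemma OddThetaZerosInLattice.of_neg_inv {τ : ℂ} (hτ : τ ≠ 0) (h : OddThetaZerosInLattice (-1 / τ)) :
    OddThetaZerosInLattice τ := by
  intro z hz
  rw [oddTheta_eq_zero_iff, jacobiTheta₂_eq_zero_iff_neg_inv hτ] at hz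
  obtain ⟨m, n, hmn⟩ := h (z / τ + 1 / τ) <| by
    rw [oddTheta_eq_zero_iff]
    convert hz using 2
    field_simp
    ring
  refine ⟨-n - 1, m, ?_⟩
  field_simp at hmn
  push_cast
  linear_combination hmn

lemma two_mul_im_le_im_neg_inv {τ : ℂ} (h0 : 0 < τ.im) (hre : |τ.re| ≤ 1 / 2)
    (him : τ.im < 1 / 2) : 2 * τ.im ≤ (-1 / τ).im := by
  have hnorm : Complex.normSq τ ≤ 1 / 2 := by
    rw [Complex.normSq_apply]
    nlinarith [abs_le.1 hre]
  have hpos : 0 < Complex.normSq τ := Complex.normSq_pos.2 fun h ↦ by simp [h] at h0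
  rw [neg_div, Complex.neg_im, one_div, Complex.inv_im, neg_div, neg_neg, le_div_iff₀ hpos]
  nlinarith

lemma oddThetaZerosInLattice {τ : ℂ} (hτ : 0 < τ.im) : OddThetaZerosInLattice τ := by
  suffices ∀ N : ℕ, ∀ τ : ℂ, 0 < τ.im → 1 / 2 ≤ 2 ^ N * τ.im → OddThetaZerosInLattice τ by
    obtain ⟨N, hN⟩ := pow_unbounded_of_one_lt (1 / (2 * τ.im)) one_lt_two
    rw [div_lt_iff₀ (by positivity)] at hN
    exact this N τ hτ (by linarith)
  intro N
  induction N with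
  | zero => exact fun τ _ h ↦ oddThetaZerosInLattice_of_half_le_im (by simpa using h)
  | succ N ih =>
    intro τ h0 hN
    by_cases hbig : 1 / 2 ≤ τ.im
    · exact oddThetaZerosInLattice_of_half_le_im hbig
    set τ₁ := τ + (-round τ.re : ℤ)
    have h₁im : τ₁.im = τ.im := by simp [τ₁]
    have h₁re : |τ₁.re| ≤ 1 / 2 := by simpa [τ₁, sub_eq_add_neg] using abs_sub_round τ.re
    have h₁ne : τ₁ ≠ 0 := fun h ↦ by simp [h] at h₁im; linarith
    have h₂ := two_mul_im_le_im_neg_inv (h₁im ▸ h0) h₁re (by linarith)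
    refine OddThetaZerosInLattice.of_add_int _ (OddThetaZerosInLattice.of_neg_inv h₁ne (ih _ ?_ ?_))
    · linarith
    · rw [pow_succ] at hN
      nlinarith [pow_pos (two_pos : (0 : ℝ) < 2) N]

def th0Term (τ u : ℂ) (m : ℤ) : ℂ :=
  cexp (2 * π * I * τ * (m : ℂ) ^ 2 + 4 * π * I * (m : ℂ) * u)

def th1Term (τ u : ℂ) (m : ℤ) : ℂ :=
  cexp (2 * π * I * τ * ((m : ℂ) + 1 / 2) ^ 2 + 4 * π * I * ((m : ℂ) + 1 / 2) * u)

lemma summable_norm_th0Term {τ : ℂ} (hτ : 0 < τ.im) (u : ℂ) : Summable fun m ↦ ‖th0Term τ u m‖ := by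
  convert summable_norm_jacobiTheta₂_term_mul_left (by simpa : 0 < (2 * τ).im) 1 (2 * u) using 3
  rw [th0Term, jacobiTheta₂_term, one_mul]
  ring_nf

lemma summable_norm_th1Term {τ : ℂ} (hτ : 0 < τ.im) (u : ℂ) : Summable fun m ↦ ‖th1Term τ u m‖ := by
  convert summable_norm_jacobiTheta₂_term_mul_left (by simpa : 0 < (2 * τ).im)
    (cexp (π * I * τ / 2 + 2 * π * I * u)) (2 * u + τ) using 3
  rw [th1Term, jacobiTheta₂_term, ← Complex.exp_add]
  ring_nf

lemma oddThetaTerm_mul_oddThetaTerm_of_odd (τ u v : ℂ) (m n : ℤ) :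
    oddThetaTerm τ (u + v) (m + n) * oddThetaTerm τ (u - v) (m - n - 1) =
      -(th0Term τ u m * th1Term τ v n) := by
  rw [oddThetaTerm, oddThetaTerm, th0Term, th1Term, ← Complex.exp_add, ← Complex.exp_add,
    neg_eq_neg_one_mul, ← Complex.exp_pi_mul_I, ← Complex.exp_add,
    Complex.exp_eq_exp_iff_exists_int]
  exact ⟨m - 1, by push_cast; ring⟩

lemma oddThetaTerm_mul_oddThetaTerm_of_even (τ u v : ℂ) (m n : ℤ) :
    oddThetaTerm τ (u + v) (m + n) * oddThetaTerm τ (u - v) (m - n) =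
      th1Term τ u m * th0Term τ v n := by
  rw [oddThetaTerm, oddThetaTerm, th0Term, th1Term, ← Complex.exp_add, ← Complex.exp_add,
    Complex.exp_eq_exp_iff_exists_int]
  exact ⟨m, by push_cast; ring⟩

lemma isCompl_range_add_sub_sub_one_range_add_sub :
    IsCompl (Set.range fun p : ℤ × ℤ ↦ (p.1 + p.2, p.1 - p.2 - 1))
      (Set.range fun p : ℤ × ℤ ↦ (p.1 + p.2, p.1 - p.2)) := by
  have hodd : (Set.range fun p : ℤ × ℤ ↦ (p.1 + p.2, p.1 - p.2 - 1)) =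
      {q | (q.1 + q.2) % 2 = 0}ᶜ := by
    ext ⟨a, b⟩
    simp only [Set.mem_range, Prod.mk.injEq, Prod.exists, Set.mem_compl_iff, Set.mem_ofPred_eq]
    constructor
    · rintro ⟨m, n, rfl, rfl⟩
      omega
    · exact fun h ↦ ⟨(a + b + 1) / 2, (a - b - 1) / 2, by omega, by omega⟩
  have heven : (Set.range fun p : ℤ × ℤ ↦ (p.1 + p.2, p.1 - p.2)) = {q | (q.1 + q.2) % 2 = 0} := by
    ext ⟨a, b⟩
    simp only [Set.mem_range, Prod.mk.injEq, Prod.exists, Set.mem_ofPred_eq]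
    constructor
    · rintro ⟨m, n, rfl, rfl⟩
      omega
    · exact fun h ↦ ⟨(a + b) / 2, (a - b) / 2, by omega, by omega⟩
  rw [hodd, heven]
  exact isCompl_compl.symm

lemma oddTheta_add_mul_oddTheta_sub {τ : ℂ} (hτ : 0 < τ.im) (u v : ℂ) :
    oddTheta τ (u + v) * oddTheta τ (u - v) = Th1 τ u * Th0 τ v - Th0 τ u * Th1 τ v := by
  set W : ℤ × ℤ → ℂ := fun q ↦ oddThetaTerm τ (u + v) q.1 * oddThetaTerm τ (u - v) q.2
  have hprod : HasSum W (oddTheta τ (u + v) * oddTheta τ (u - v)) :=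
    hasSum_mul_of_summable_norm (summable_norm_oddThetaTerm hτ _) (summable_norm_oddThetaTerm hτ _)
  have hodd : HasSum (fun p : ℤ × ℤ ↦ -(th0Term τ u p.1 * th1Term τ v p.2))
      (-(Th0 τ u * Th1 τ v)) :=
    (hasSum_mul_of_summable_norm (summable_norm_th0Term hτ u) (summable_norm_th1Term hτ v)).neg
  have heven : HasSum (fun p : ℤ × ℤ ↦ th1Term τ u p.1 * th0Term τ v p.2) (Th1 τ u * Th0 τ v) :=
    hasSum_mul_of_summable_norm (summable_norm_th1Term hτ u) (summable_norm_th0Term hτ v)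
  simp only [← oddThetaTerm_mul_oddThetaTerm_of_odd τ u v] at hodd
  simp only [← oddThetaTerm_mul_oddThetaTerm_of_even τ u v] at heven
  have hinj_odd : Function.Injective fun p : ℤ × ℤ ↦ (p.1 + p.2, p.1 - p.2 - 1) :=
    fun p q h ↦ by simp only [Prod.mk.injEq] at h; ext <;> omega
  have hinj_even : Function.Injective fun p : ℤ × ℤ ↦ (p.1 + p.2, p.1 - p.2) :=
    fun p q h ↦ by simp only [Prod.mk.injEq] at h; ext <;> omega
  refine (hprod.unique ?_).trans (neg_add_eq_sub _ _)
  exact HasSum.add_isCompl (f := W) isCompl_range_add_sub_sub_one_range_add_sub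
    (hinj_odd.hasSum_range_iff.2 hodd) (hinj_even.hasSum_range_iff.2 heven)

end

/-- if `u, u' ∈ ℂ` satisfy both `Θ₀(u)Θ₁(u') = Θ₁(u)Θ₀(u')` and
`Θ₀(u+τ/4)Θ₁(u'+τ/4) = Θ₁(u+τ/4)Θ₀(u'+τ/4)`, then `u − u' ∈ Λ_τ`.  (Hence the map
`Φ = (Φ₁, Φ₂) : ℂ/Λ_τ → ℙ¹ × ℙ¹` with `Φ₁(u) = (Θ₀(u) : −Θ₁(u))` and
`Φ₂(u) = (Θ₀(u+τ/4) : −iΘ₁(u+τ/4))` is injective on the elliptic curve `E_τ`.) -/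
theorem theta_embedding_injective (τ : ℂ) (hτ : 0 < τ.im) (u u' : ℂ)
    (h1 : Th0 τ u * Th1 τ u' = Th1 τ u * Th0 τ u')
    (h2 : Th0 τ (u + τ / 4) * Th1 τ (u' + τ / 4)
        = Th1 τ (u + τ / 4) * Th0 τ (u' + τ / 4)) :
    inLattice τ (u - u') := by
  have hzeros := oddThetaZerosInLattice hτ
  have hV₁ : oddTheta τ (u + u') * oddTheta τ (u - u') = 0 := by
    rw [oddTheta_add_mul_oddTheta_sub hτ, h1, sub_self]
  have hV₂ : oddTheta τ (u + u' + τ / 2) * oddTheta τ (u - u') = 0 := by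
    have := oddTheta_add_mul_oddTheta_sub hτ (u + τ / 4) (u' + τ / 4)
    rwa [h2, sub_self, show u + τ / 4 + (u' + τ / 4) = u + u' + τ / 2 by ring,
      show u + τ / 4 - (u' + τ / 4) = u - u' by ring] at this
  rcases mul_eq_zero.1 hV₁ with hsum | hdiff
  · rcases mul_eq_zero.1 hV₂ with hsum' | hdiff
    · have hhalf := (hzeros _ hsum').sub (hzeros _ hsum)
      rw [add_sub_cancel_left] at hhalf
      exact absurd hhalf (not_inLattice_half_self hτ)
    · exact hzeros _ hdiff
  · exact hzeros _ hdiff
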